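/- Let J = Z− and suppose the triangular system x(n+1) = (A11(n) A12(n); 0 A22(n)) x(n) admits an exponential dichotomy on Z− with projections P(n) such that d := dim ker P(0) < +∞. Then the block system x1(n+1) = A11(n) x1(n) admits an exponential dichotomy on Z−, and d1(m) := dim U1(m) satisfies d1(m) ≤ d and is independent of m ∈ Z−. -/

import Mathlib

/-!
Bounded backward solutions `v` of the first block give bounded backward solutions `(v, 0)` of the
triangular system, so they lie in its unstable fibres `ker P(n)`; as the cocycle is injective on
these, `U₁(n) ≅ U₁(0) ↪ ker P(0)`, which gives the dimension statements.

For the dichotomy of the first block, take `U₁(n)` as unstable spaces and as stable spaces the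
vectors whose image at time `0` is orthogonal to `U₁(0)`. The key estimate is that for such an `s`
the unstable part of `(s, 0)`, moved to time `0`, is `O(e^{αn} ‖s‖)`. That vector `c ∈ ker P(0)` has
a small `U₁(0)`-component, and its backward orbit inside the unstable fibres has small
`H2`-components, because these only see the decaying orbit of `P(n)(s, 0)`. A vector of `ker P(0)`
for which all of these observations vanish lies in `U₁(0) ∩ U₁(0)ᗮ = 0`, so since `ker P(0)` is
finite-dimensional, finitely many observations already bound `‖c‖`. This estimate gives the decay
on the stable spaces, and far in the past it gives a uniform bound for the projections; the
finitely many remaining times are handled one by one.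
-/

open Real ContinuousLinearMap

noncomputable section

universe u

variable {X : Type u} [NormedAddCommGroup X] [NormedSpace ℝ X]

/-- The cocycle associated with the system `x(n+1) = A(n) x(n)`, as a function of the
number of steps: `cocycleAux A n k = A(n+k-1) ∘ ⋯ ∘ A(n)`. -/
def cocycleAux (A : ℤ → X →L[ℝ] X) (n : ℤ) : ℕ → (X →L[ℝ] X)
  | 0 => ContinuousLinearMap.id ℝ X
  | k + 1 => (A (n + k)).comp (cocycleAux A n k)

/-- The cocycle `Φ(m, n) = A(m-1) ⋯ A(n)` for `m > n`, and `Φ(n, n) = Id`. -/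
def Phi (A : ℤ → X →L[ℝ] X) (m n : ℤ) : X →L[ℝ] X :=
  cocycleAux A n (m - n).toNat

/-- The system `x(n+1) = A(n) x(n)`, `n ∈ J'`, admits an exponential dichotomy on `J`
with respect to the family of (bounded) projections `P(n)`, `n ∈ J`:
there are constants `K, α > 0` such that
(i) `P(n)` are projections, `A(n) P(n) = P(n+1) A(n)` for `n ∈ J'`, and `A(n)` maps
`ker P(n)` bijectively onto `ker P(n+1)` for `n ∈ J'`;
(ii) `‖Φ(m,n) P(n)‖ ≤ K e^{-α (m-n)}` for `m ≥ n` in `J`;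
(iii) `‖Φ(m,n) (Id - P(n))‖ ≤ K e^{-α (n-m)}` for `m ≤ n` in `J`, where
`Φ(m,n) : ker P(n) → ker P(m)` denotes the inverse of `Φ(n,m)` restricted to `ker P(m)`;
the latter is phrased as: whenever `x ∈ ker P(m)` and `Φ(n,m) x = (Id - P(n)) y`,
then `‖x‖ ≤ K e^{-α (n-m)} ‖y‖`. -/
def IsExpDichotomy (J J' : Set ℤ) (A P : ℤ → X →L[ℝ] X) : Prop :=
  ∃ K α : ℝ, 0 < K ∧ 0 < α ∧
    (∀ n ∈ J, (P n).comp (P n) = P n) ∧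
    (∀ n ∈ J', (A n).comp (P n) = (P (n + 1)).comp (A n)) ∧
    (∀ n ∈ J', Set.BijOn (A n) {x : X | P n x = 0} {x : X | P (n + 1) x = 0}) ∧
    (∀ m n : ℤ, m ∈ J → n ∈ J → n ≤ m →
      ‖(Phi A m n).comp (P n)‖ ≤ K * Real.exp (-α * ((m : ℝ) - (n : ℝ)))) ∧
    (∀ m n : ℤ, m ∈ J → n ∈ J → m ≤ n → ∀ x y : X,
      P m x = 0 → Phi A n m x = y - P n y →
      ‖x‖ ≤ K * Real.exp (-α * ((n : ℝ) - (m : ℝ))) * ‖y‖)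

/-- The system `x(n+1) = A(n) x(n)`, `n ∈ J'`, admits an exponential dichotomy on `J`. -/
def ExpDichotomy (J J' : Set ℤ) (A : ℤ → X →L[ℝ] X) : Prop :=
  ∃ P : ℤ → X →L[ℝ] X, IsExpDichotomy J J' A P

/-- A subspace (given as a set) `S` of `X` is complemented: there is a closed subspace `Z`
of `X` with `X = S ⊕ Z`. -/
def IsComplementedSubspace (S : Set X) : Prop :=
  ∃ Z : Submodule ℝ X, IsClosed (Z : Set X) ∧
    (∀ v ∈ S, v ∈ Z → v = (0 : X)) ∧ ∀ v : X, ∃ s ∈ S, ∃ z ∈ Z, v = s + z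

/-- The subspace `S = {v : sup_{n ∈ ℤ⁺} ‖Φ(n,0) v‖ < ∞}` of initial conditions of bounded
forward solutions. -/
def Sset (A : ℤ → X →L[ℝ] X) : Set X :=
  {v : X | ∃ C : ℝ, ∀ n : ℤ, 0 ≤ n → ‖Phi A n 0 v‖ ≤ C}

/-- The subspace `U(m)` of all `v` for which there is a bounded sequence `(x(n))_{n ≤ m}`
with `x(m) = v` and `x(n) = A(n-1) x(n-1)` for `n ≤ m`. -/
def Uset (A : ℤ → X →L[ℝ] X) (m : ℤ) : Set X :=
  {v : X | ∃ x : ℤ → X, x m = v ∧ (∃ C : ℝ, ∀ n : ℤ, n ≤ m → ‖x n‖ ≤ C) ∧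
    ∀ n : ℤ, n ≤ m → x n = A (n - 1) (x (n - 1))}

variable {X1 : Type u} {X2 : Type u} [NormedAddCommGroup X1] [NormedSpace ℝ X1]
  [NormedAddCommGroup X2] [NormedSpace ℝ X2]

/-- The triangular system operator `(x1, x2) ↦ (A11(n) x1 + A12(n) x2, A22(n) x2)`. -/
def triangular (A11 : ℤ → X1 →L[ℝ] X1) (A12 : ℤ → X2 →L[ℝ] X1)
    (A22 : ℤ → X2 →L[ℝ] X2) (n : ℤ) : (X1 × X2) →L[ℝ] X1 × X2 :=
  (((A11 n).comp (fst ℝ X1 X2)) + ((A12 n).comp (snd ℝ X1 X2))).prod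
    ((A22 n).comp (snd ℝ X1 X2))

/-- The diagonal system operator `(x1, x2) ↦ (A11(n) x1, A22(n) x2)`. -/
def diagonal (A11 : ℤ → X1 →L[ℝ] X1) (A22 : ℤ → X2 →L[ℝ] X2) (n : ℤ) :
    (X1 × X2) →L[ℝ] X1 × X2 :=
  (A11 n).prodMap (A22 n)

open Filter Topology

@[simp]
lemma norm_mk_zero {E F : Type*} [SeminormedAddCommGroup E] [SeminormedAddCommGroup F] (v : E) :
    ‖((v, 0) : E × F)‖ = ‖v‖ := by
  simp [Prod.norm_mk]

lemma Filter.Eventually.forall_le_of_forall_le {β : Type*} {l : Filter β} {p : ℤ → β → Prop}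
    (hp : ∀ n, ∀ᶠ x in l, p n x) {N : ℤ} (hN : ∀ᶠ x in l, ∀ n ≤ N, p n x) (M : ℤ) :
    ∀ᶠ x in l, ∀ n ≤ M, p n x := by
  filter_upwards [(Set.finite_Icc N M).eventually_all.2 fun n _ => hp n, hN] with x hwin hdeep n hn
  by_cases hnN : n ≤ N
  · exact hdeep n hnN
  · exact hwin n ⟨by omega, hn⟩

lemma exists_norm_le_of_iInf_ker_eq_bot {𝕜 V F : Type*} [NontriviallyNormedField 𝕜]
    [CompleteSpace 𝕜] [NormedAddCommGroup V] [NormedSpace 𝕜 V] [FiniteDimensional 𝕜 V]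
    [NormedAddCommGroup F] [NormedSpace 𝕜 F] (f : ℕ → V →ₗ[𝕜] F)
    (hf : ⨅ i, LinearMap.ker (f i) = ⊥) :
    ∃ j : ℕ, ∃ M : ℝ, ∀ c : V, ∀ δ : ℝ, (∀ i ≤ j, ‖f i c‖ ≤ δ) → ‖c‖ ≤ M * δ := by
  set W : ℕ → Submodule 𝕜 V := fun j => ⨅ i : Fin (j + 1), LinearMap.ker (f i)
  have hW : Antitone W := fun j j' hjj' => le_iInf fun i => iInf_le_of_le ⟨i, by omega⟩ le_rfl
  obtain ⟨j, hj⟩ := IsArtinian.monotone_stabilizes ⟨OrderDual.toDual ∘ W, hW.dual_right⟩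
  have hker : LinearMap.ker (LinearMap.pi fun i : Fin (j + 1) => f i) = ⊥ := by
    rw [LinearMap.ker_pi, eq_bot_iff, ← hf]
    refine le_iInf fun i => ?_
    have hWj : W j = W (max i j) := OrderDual.toDual.injective (hj _ (le_max_right _ _))
    change W j ≤ _
    rw [hWj]
    exact iInf_le_of_le ⟨i, by omega⟩ le_rfl
  obtain ⟨M, -, hM⟩ := LinearMap.exists_antilipschitzWith _ hker
  refine ⟨j, M, fun c δ hc => ?_⟩
  have hδ : 0 ≤ δ := (norm_nonneg _).trans (hc 0 (Nat.zero_le j))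
  have hdist := hM.le_mul_dist c 0
  simp only [dist_zero_right, map_zero] at hdist
  refine hdist.trans (mul_le_mul_of_nonneg_left ?_ M.2)
  exact (pi_norm_le_iff_of_nonneg hδ).2 fun i => hc i (by omega)

section Cocycle

variable {A : ℤ → X →L[ℝ] X}

@[simp]
lemma Phi_self (n : ℤ) : Phi A n n = ContinuousLinearMap.id ℝ X := by
  simp [Phi, cocycleAux]

lemma Phi_add_one_apply {m n : ℤ} (h : n ≤ m) (x : X) :
    Phi A (m + 1) n x = A m (Phi A m n x) := by
  have hsucc : (m + 1 - n).toNat = (m - n).toNat + 1 := by omega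
  have hm : n + ((m - n).toNat : ℤ) = m := by omega
  simp only [Phi, hsucc, cocycleAux, hm, ContinuousLinearMap.comp_apply]

lemma Phi_add_one_self_apply (n : ℤ) (x : X) : Phi A (n + 1) n x = A n x := by
  rw [Phi_add_one_apply le_rfl, Phi_self, ContinuousLinearMap.id_apply]

lemma Phi_Phi_apply {n k m : ℤ} (hnk : n ≤ k) (hkm : k ≤ m) (x : X) :
    Phi A m k (Phi A k n x) = Phi A m n x := by
  induction m, hkm using Int.leInduction with
  | base => simp
  | succ m hkm ih => rw [Phi_add_one_apply hkm, Phi_add_one_apply (hnk.trans hkm), ih]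

end Cocycle

section BoundedPast

variable {A : ℤ → X →L[ℝ] X} {m n : ℤ}

lemma Phi_apply_eq_of_solution {x : ℤ → X} (hx : ∀ n ≤ m, x n = A (n - 1) (x (n - 1)))
    {k j : ℤ} (hkj : k ≤ j) (hjm : j ≤ m) : Phi A j k (x k) = x j := by
  induction j, hkj using Int.leInduction with
  | base => simp
  | succ j hkj ih =>
    rw [Phi_add_one_apply hkj, ih (by omega), hx (j + 1) hjm, add_sub_cancel_right]

def Usubmodule (A : ℤ → X →L[ℝ] X) (m : ℤ) : Submodule ℝ X where
  carrier := Uset A m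
  zero_mem' := ⟨0, rfl, ⟨0, by simp⟩, by simp⟩
  add_mem' := by
    rintro v w ⟨x, rfl, ⟨C, hC⟩, hx⟩ ⟨y, rfl, ⟨D, hD⟩, hy⟩
    refine ⟨x + y, rfl, ⟨C + D, fun n hn => ?_⟩, fun n hn => by simp [hx n hn, hy n hn]⟩
    exact (norm_add_le _ _).trans (add_le_add (hC n hn) (hD n hn))
  smul_mem' := by
    rintro c v ⟨x, rfl, ⟨C, hC⟩, hx⟩
    refine ⟨c • x, rfl, ⟨‖c‖ * C, fun n hn => ?_⟩, fun n hn => by simp [hx n hn]⟩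
    rw [Pi.smul_apply, norm_smul]
    exact mul_le_mul_of_nonneg_left (hC n hn) (norm_nonneg c)

lemma span_Uset (A : ℤ → X →L[ℝ] X) (m : ℤ) : Submodule.span ℝ (Uset A m) = Usubmodule A m :=
  Submodule.span_eq (Usubmodule A m)

lemma apply_mem_Usubmodule {v : X} (hv : v ∈ Usubmodule A m) : A m v ∈ Usubmodule A (m + 1) := by
  obtain ⟨x, rfl, ⟨C, hC⟩, hx⟩ := hv
  refine ⟨fun k => if k ≤ m then x k else A m (x m), by simp, ⟨max C ‖A m (x m)‖, fun k hk => ?_⟩,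
    fun k hk => ?_⟩
  · dsimp only
    split_ifs with hkm
    · exact (hC k hkm).trans (le_max_left _ _)
    · exact le_max_right _ _
  · by_cases hkm : k ≤ m
    · simp [hkm, show k - 1 ≤ m by omega, hx k hkm]
    · simp [show k = m + 1 by omega]

lemma Phi_apply_mem_Usubmodule (hmn : m ≤ n) {v : X} (hv : v ∈ Usubmodule A m) :
    Phi A n m v ∈ Usubmodule A n := by
  induction n, hmn using Int.leInduction with
  | base => simpa using hv
  | succ n hmn ih => rw [Phi_add_one_apply hmn]; exact apply_mem_Usubmodule ih

lemma exists_Phi_apply_eq_of_mem_Usubmodule (hmn : m ≤ n) {v : X} (hv : v ∈ Usubmodule A n) :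
    ∃ u ∈ Usubmodule A m, Phi A n m u = v := by
  obtain ⟨x, rfl, ⟨C, hC⟩, hx⟩ := hv
  exact ⟨x m, ⟨x, rfl, ⟨C, fun k hk => hC k (hk.trans hmn)⟩, fun k hk => hx k (hk.trans hmn)⟩,
    Phi_apply_eq_of_solution hx hmn le_rfl⟩

end BoundedPast

structure IsExpDichotomyWith (A P : ℤ → X →L[ℝ] X) (K α : ℝ) : Prop where
  K_pos : 0 < K
  α_pos : 0 < α
  proj : ∀ n ≤ 0, (P n).comp (P n) = P n
  comm : ∀ n ≤ -1, (A n).comp (P n) = (P (n + 1)).comp (A n)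
  bijOn : ∀ n ≤ -1, Set.BijOn (A n) {x : X | P n x = 0} {x : X | P (n + 1) x = 0}
  stable : ∀ m n : ℤ, m ≤ 0 → n ≤ 0 → n ≤ m →
    ‖(Phi A m n).comp (P n)‖ ≤ K * exp (-α * ((m : ℝ) - (n : ℝ)))
  unstable : ∀ m n : ℤ, m ≤ 0 → n ≤ 0 → m ≤ n → ∀ x y : X,
    P m x = 0 → Phi A n m x = y - P n y → ‖x‖ ≤ K * exp (-α * ((n : ℝ) - (m : ℝ))) * ‖y‖

lemma isExpDichotomy_iff {A P : ℤ → X →L[ℝ] X} :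
    IsExpDichotomy {n : ℤ | n ≤ 0} {n : ℤ | n ≤ -1} A P ↔ ∃ K α, IsExpDichotomyWith A P K α :=
  ⟨fun ⟨K, α, hK, hα, h1, h2, h3, h4, h5⟩ => ⟨K, α, ⟨hK, hα, h1, h2, h3, h4, h5⟩⟩,
    fun ⟨K, α, ⟨hK, hα, h1, h2, h3, h4, h5⟩⟩ => ⟨K, α, hK, hα, h1, h2, h3, h4, h5⟩⟩

abbrev unstableFiber (P : ℤ → X →L[ℝ] X) (n : ℤ) : Submodule ℝ X :=
  LinearMap.ker (P n : X →ₗ[ℝ] X)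

namespace IsExpDichotomyWith

variable {A P : ℤ → X →L[ℝ] X} {K α : ℝ} (h : IsExpDichotomyWith A P K α) {k m n : ℤ}
include h

lemma P_P_apply (hn : n ≤ 0) (x : X) : P n (P n x) = P n x :=
  congrArg (fun f : X →L[ℝ] X => f x) (h.proj n hn)

lemma Phi_P_apply (hnm : n ≤ m) (hm : m ≤ 0) (x : X) :
    Phi A m n (P n x) = P m (Phi A m n x) := by
  induction m, hnm using Int.leInduction with
  | base => simp
  | succ m hnm ih =>
    rw [Phi_add_one_apply hnm, Phi_add_one_apply hnm, ih (by omega)]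
    exact congrArg (fun f : X →L[ℝ] X => f (Phi A m n x)) (h.comm m (by omega))

lemma P_Phi_apply_eq_zero (hnm : n ≤ m) (hm : m ≤ 0) {x : X} (hx : P n x = 0) :
    P m (Phi A m n x) = 0 := by
  rw [← h.Phi_P_apply hnm hm, hx, map_zero]

lemma P_sub_P_apply (hn : n ≤ 0) (x : X) : P n (x - P n x) = 0 := by
  rw [map_sub, h.P_P_apply hn, sub_self]

lemma norm_P_le (hn : n ≤ 0) : ‖P n‖ ≤ K := by
  simpa using h.stable n n hn hn le_rfl

lemma norm_sub_P_apply_le (hn : n ≤ 0) (x : X) : ‖x - P n x‖ ≤ (1 + K) * ‖x‖ :=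
  calc ‖x - P n x‖ ≤ ‖x‖ + ‖P n‖ * ‖x‖ :=
        (norm_sub_le _ _).trans (by gcongr; exact (P n).le_opNorm x)
    _ ≤ (1 + K) * ‖x‖ := by nlinarith [h.norm_P_le hn, norm_nonneg x]

lemma norm_Phi_P_apply_le (hnm : n ≤ m) (hm : m ≤ 0) (x : X) :
    ‖Phi A m n (P n x)‖ ≤ K * exp (-α * ((m : ℝ) - n)) * ‖x‖ :=
  ((Phi A m n).comp (P n)).le_opNorm x |>.trans <| by
    gcongr; exact h.stable m n hm (hnm.trans hm) hnm

lemma norm_le_of_P_eq_zero (hmn : m ≤ n) (hn : n ≤ 0) {x : X} (hx : P m x = 0) :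
    ‖x‖ ≤ K * exp (-α * ((n : ℝ) - m)) * ‖Phi A n m x‖ :=
  h.unstable m n (hmn.trans hn) hn hmn x _ hx (by rw [h.P_Phi_apply_eq_zero hmn hn hx, sub_zero])

lemma norm_le_of_P_eq_zero' (hm : m ≤ 0) {x : X} (hx : P m x = 0) :
    ‖x‖ ≤ K * exp (α * m) * ‖Phi A 0 m x‖ := by
  simpa using h.norm_le_of_P_eq_zero hm le_rfl hx

lemma norm_Phi_apply_le_of_P_eq_zero (hnm : n ≤ m) (hm : m ≤ 0) {x : X} (hx : P n x = 0) :
    ‖Phi A m n x‖ ≤ K * exp (α * m) * ‖Phi A 0 n x‖ := by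
  simpa [Phi_Phi_apply hnm hm] using h.norm_le_of_P_eq_zero' hm (h.P_Phi_apply_eq_zero hnm hm hx)

lemma P_eq_zero_of_mem_Usubmodule (hn : n ≤ 0) {v : X} (hv : v ∈ Usubmodule A n) : P n v = 0 := by
  obtain ⟨x, rfl, ⟨C, hC⟩, hx⟩ := hv
  have hbound : ∀ j : ℕ, ‖P n (x n)‖ ≤ K * C * exp (-α) ^ j := fun j => by
    have hj : n - j ≤ n := by omega
    rw [← Phi_apply_eq_of_solution hx hj le_rfl, ← h.Phi_P_apply hj hn]
    refine (h.norm_Phi_P_apply_le hj hn _).trans ?_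
    rw [← exp_nat_mul, show (j : ℝ) * -α = -α * ((n : ℝ) - ((n - j : ℤ) : ℝ)) by push_cast; ring,
      mul_right_comm]
    have := h.K_pos
    gcongr
    exact hC _ hj
  have hlim : Tendsto (fun j : ℕ => K * C * exp (-α) ^ j) atTop (𝓝 0) := by
    simpa using (tendsto_pow_atTop_nhds_zero_of_lt_one (exp_pos _).le
      (exp_lt_one_iff.mpr (neg_lt_zero.mpr h.α_pos))).const_mul (K * C)
  exact norm_le_zero_iff.mp (ge_of_tendsto' hlim hbound)

lemma exists_P_eq_zero_Phi_apply_eq (hnm : n ≤ m) (hm : m ≤ 0) {y : X} (hy : P m y = 0) :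
    ∃ x, P n x = 0 ∧ Phi A m n x = y := by
  induction m, hnm using Int.leInduction generalizing y with
  | base => exact ⟨y, hy, by simp⟩
  | succ m hnm ih =>
    obtain ⟨z, hz, rfl⟩ := (h.bijOn m (by omega)).surjOn hy
    obtain ⟨x, hx, rfl⟩ := ih (by omega) hz
    exact ⟨x, hx, Phi_add_one_apply hnm x⟩

def kerEquiv (hk : k ≤ 0) : unstableFiber P k ≃ₗ[ℝ] unstableFiber P 0 :=
  LinearEquiv.ofBijective
    ((Phi A 0 k : X →ₗ[ℝ] X).restrict fun _ hx => h.P_Phi_apply_eq_zero hk le_rfl hx)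
    ⟨(injective_iff_map_eq_zero _).2 fun u hu => by
      have hΦ : Phi A 0 k u = 0 := congrArg Subtype.val hu
      simpa [hΦ] using h.norm_le_of_P_eq_zero' hk u.2,
    fun c => by
      obtain ⟨x, hx, hxc⟩ := h.exists_P_eq_zero_Phi_apply_eq hk le_rfl c.2
      exact ⟨⟨x, hx⟩, Subtype.ext hxc⟩⟩

lemma coe_kerEquiv_apply (hk : k ≤ 0) (u : unstableFiber P k) :
    (h.kerEquiv hk u : X) = Phi A 0 k u := rfl

lemma coe_kerEquiv_symm_apply (hnk : n ≤ k) (hk : k ≤ 0) {x : X} (hx : P n x = 0)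
    {c : unstableFiber P 0} (hc : (c : X) = Phi A 0 n x) :
    ((h.kerEquiv hk).symm c : X) = Phi A k n x := by
  have hsymm : (h.kerEquiv hk).symm c = ⟨Phi A k n x, h.P_Phi_apply_eq_zero hnk hk hx⟩ :=
    (h.kerEquiv hk).symm_apply_eq.mpr <| Subtype.ext <| by
      rw [hc, coe_kerEquiv_apply, Phi_Phi_apply hnk hk]
  rw [hsymm]

lemma coe_kerEquiv_zero_symm_apply (c : unstableFiber P 0) :
    ((h.kerEquiv le_rfl).symm c : X) = c := by
  simp [h.coe_kerEquiv_symm_apply le_rfl le_rfl c.2 (c := c) (by simp)]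

lemma coe_kerEquiv_symm_eq_apply_sub_one (hk : k ≤ 0) (c : unstableFiber P 0) :
    ((h.kerEquiv hk).symm c : X) = A (k - 1) ((h.kerEquiv (k := k - 1) (by omega)).symm c) := by
  set u := (h.kerEquiv (k := k - 1) (by omega)).symm c
  have hu : (c : X) = Phi A 0 (k - 1) u := by
    rw [← h.coe_kerEquiv_apply (k := k - 1) (by omega), LinearEquiv.apply_symm_apply]
  rw [h.coe_kerEquiv_symm_apply (by omega) hk u.2 hu]
  simpa using Phi_add_one_self_apply (A := A) (k - 1) (u : X)

lemma norm_kerEquiv_symm_apply_le (hk : k ≤ 0) (c : unstableFiber P 0) :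
    ‖((h.kerEquiv hk).symm c : X)‖ ≤ K * exp (α * k) * ‖c‖ := by
  simpa [← coe_kerEquiv_apply h hk] using h.norm_le_of_P_eq_zero' hk ((h.kerEquiv hk).symm c).2

end IsExpDichotomyWith

section Triangular

variable {H1 H2 : Type u} [NormedAddCommGroup H1] [NormedSpace ℝ H1]
  [NormedAddCommGroup H2] [NormedSpace ℝ H2]
  {A11 : ℤ → H1 →L[ℝ] H1} {A12 : ℤ → H2 →L[ℝ] H1} {A22 : ℤ → H2 →L[ℝ] H2}

@[simp]
lemma triangular_apply (n : ℤ) (x : H1 × H2) :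
    triangular A11 A12 A22 n x = (A11 n x.1 + A12 n x.2, A22 n x.2) := rfl

lemma Phi_triangular_mk_zero {m n : ℤ} (hnm : n ≤ m) (v : H1) :
    Phi (triangular A11 A12 A22) m n (v, 0) = (Phi A11 m n v, 0) := by
  induction m, hnm using Int.leInduction with
  | base => simp
  | succ m hnm ih => simp [Phi_add_one_apply hnm, ih]

lemma mk_zero_mem_Usubmodule_triangular {m : ℤ} {v : H1} (hv : v ∈ Usubmodule A11 m) :
    (v, (0 : H2)) ∈ Usubmodule (triangular A11 A12 A22) m := by
  obtain ⟨x, rfl, ⟨C, hC⟩, hx⟩ := hv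
  exact ⟨fun n => (x n, 0), rfl, ⟨C, fun n hn => by simpa using hC n hn⟩,
    fun n hn => by simp [hx n hn]⟩

lemma Phi_triangular_sub_P_mk_zero {P : ℤ → (H1 × H2) →L[ℝ] H1 × H2} {k n : ℤ} (hnk : n ≤ k)
    (s : H1) : Phi (triangular A11 A12 A22) k n ((s, 0) - P n (s, 0)) =
      (Phi A11 k n s, 0) - Phi (triangular A11 A12 A22) k n (P n (s, 0)) := by
  rw [map_sub, Phi_triangular_mk_zero hnk]

namespace IsExpDichotomyWith

variable {P : ℤ → (H1 × H2) →L[ℝ] H1 × H2} {K α : ℝ}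
  (h : IsExpDichotomyWith (triangular A11 A12 A22) P K α) {m n : ℤ}
include h

lemma P_mk_zero_eq_zero (hn : n ≤ 0) {v : H1} (hv : v ∈ Usubmodule A11 n) : P n (v, 0) = 0 :=
  h.P_eq_zero_of_mem_Usubmodule hn (mk_zero_mem_Usubmodule_triangular hv)

lemma norm_le_of_mem_Usubmodule (hmn : m ≤ n) (hn : n ≤ 0) {v : H1}
    (hv : v ∈ Usubmodule A11 m) : ‖v‖ ≤ K * exp (-α * ((n : ℝ) - m)) * ‖Phi A11 n m v‖ := by
  simpa [Phi_triangular_mk_zero hmn] using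
    h.norm_le_of_P_eq_zero hmn hn (h.P_mk_zero_eq_zero (hmn.trans hn) hv)

def UsubmoduleEquiv (hn : n ≤ 0) : Usubmodule A11 n ≃ₗ[ℝ] Usubmodule A11 0 :=
  LinearEquiv.ofBijective
    ((Phi A11 0 n : H1 →ₗ[ℝ] H1).restrict fun _ hv => Phi_apply_mem_Usubmodule hn hv)
    ⟨(injective_iff_map_eq_zero _).2 fun u hu => by
      have hΦ : Phi A11 0 n u = 0 := congrArg Subtype.val hu
      simpa [hΦ] using h.norm_le_of_mem_Usubmodule hn le_rfl u.2,
    fun w => by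
      obtain ⟨u, hu, hΦ⟩ := exists_Phi_apply_eq_of_mem_Usubmodule hn w.2
      exact ⟨⟨u, hu⟩, Subtype.ext hΦ⟩⟩

lemma bijOn_Usubmodule (hn : n ≤ -1) :
    Set.BijOn (A11 n) (Usubmodule A11 n) (Usubmodule A11 (n + 1)) := by
  refine ⟨fun _ hu => apply_mem_Usubmodule hu, fun u hu v hv huv => ?_, fun w hw => ?_⟩
  · have hΦ : Phi A11 (n + 1) n (u - v) = 0 := by
      rw [map_sub, Phi_add_one_self_apply, Phi_add_one_self_apply, huv, sub_self]
    simpa [hΦ, sub_eq_zero] using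
      h.norm_le_of_mem_Usubmodule (show n ≤ n + 1 by omega) (by omega) (sub_mem hu hv)
  · obtain ⟨u, hu, rfl⟩ := exists_Phi_apply_eq_of_mem_Usubmodule (by omega : n ≤ n + 1) hw
    exact ⟨u, hu, (Phi_add_one_self_apply n u).symm⟩

def inlUsubmodule : Usubmodule A11 0 →ₗ[ℝ] unstableFiber P 0 :=
  LinearMap.codRestrict _ ((LinearMap.inl ℝ H1 H2).comp (Usubmodule A11 0).subtype)
    fun v => h.P_mk_zero_eq_zero le_rfl v.2

lemma inlUsubmodule_injective : Function.Injective h.inlUsubmodule := fun _ _ huv =>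
  Subtype.ext (congrArg (fun c : unstableFiber P 0 => (c : H1 × H2).1) huv)

lemma rank_Usubmodule_zero_le :
    Module.rank ℝ (Usubmodule A11 0) ≤ Module.rank ℝ (unstableFiber P 0) :=
  LinearMap.rank_le_of_injective _ h.inlUsubmodule_injective

lemma finiteDimensional_Usubmodule
    [FiniteDimensional ℝ (unstableFiber P 0)] :
    FiniteDimensional ℝ (Usubmodule A11 0) :=
  Module.Finite.of_injective _ h.inlUsubmodule_injective

lemma fst_mem_Usubmodule_of_forall_snd_eq_zero (c : unstableFiber P 0)
    (hc : ∀ k (hk : k ≤ 0), ((h.kerEquiv hk).symm c : H1 × H2).2 = 0) :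
    (c : H1 × H2).1 ∈ Usubmodule A11 0 := by
  refine ⟨fun k => if hk : k ≤ 0 then ((h.kerEquiv hk).symm c : H1 × H2).1 else 0, ?_,
    ⟨K * ‖c‖, fun k hk => ?_⟩, fun k hk => ?_⟩
  · simp [h.coe_kerEquiv_zero_symm_apply]
  · dsimp only
    rw [dif_pos hk]
    refine (_root_.norm_fst_le _).trans <| (h.norm_kerEquiv_symm_apply_le hk c).trans ?_
    have : exp (α * k) ≤ 1 := exp_le_one_iff.2 (mul_nonpos_of_nonneg_of_nonpos h.α_pos.le
      (by exact_mod_cast hk))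
    exact mul_le_mul_of_nonneg_right (mul_le_of_le_one_right h.K_pos.le this) (norm_nonneg _)
  · dsimp only
    rw [dif_pos hk, dif_pos (by omega), h.coe_kerEquiv_symm_eq_apply_sub_one hk, triangular_apply,
      hc, map_zero, add_zero]

end IsExpDichotomyWith

end Triangular

section Hilbert

variable {H1 H2 : Type u} [NormedAddCommGroup H1] [InnerProductSpace ℝ H1]
  [NormedAddCommGroup H2] [NormedSpace ℝ H2]
  {A11 : ℤ → H1 →L[ℝ] H1} {A12 : ℤ → H2 →L[ℝ] H1} {A22 : ℤ → H2 →L[ℝ] H2} {m n : ℤ}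

/-- Stable subspaces are not determined by a system on `ℤ⁻`; this is a choice. -/
def stableSubmodule (A11 : ℤ → H1 →L[ℝ] H1) [(Usubmodule A11 0).HasOrthogonalProjection]
    (n : ℤ) : Submodule ℝ H1 :=
  LinearMap.ker ((Usubmodule A11 0).starProjection ∘L Phi A11 0 n : H1 →ₗ[ℝ] H1)

section

variable [(Usubmodule A11 0).HasOrthogonalProjection]

lemma mem_stableSubmodule {s : H1} :
    s ∈ stableSubmodule A11 n ↔ (Usubmodule A11 0).starProjection (Phi A11 0 n s) = 0 :=
  Iff.rfl

lemma apply_mem_stableSubmodule (hn : n ≤ -1) {s : H1} (hs : s ∈ stableSubmodule A11 n) :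
    A11 n s ∈ stableSubmodule A11 (n + 1) := by
  rwa [mem_stableSubmodule, ← Phi_add_one_self_apply (A := A11) n s,
    Phi_Phi_apply (by omega) (by omega)]

end

namespace IsExpDichotomyWith

variable {P : ℤ → (H1 × H2) →L[ℝ] H1 × H2} {K α : ℝ}
  (h : IsExpDichotomyWith (triangular A11 A12 A22) P K α)
include h

section

variable [(Usubmodule A11 0).HasOrthogonalProjection]

lemma exists_norm_le_of_observations [FiniteDimensional ℝ (unstableFiber P 0)] :
    ∃ j : ℕ, ∃ M : ℝ, ∀ c : unstableFiber P 0, ∀ δ : ℝ,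
      ‖(Usubmodule A11 0).starProjection (c : H1 × H2).1‖ ≤ δ →
      (∀ i : ℕ, i ≤ j → ‖((h.kerEquiv (k := -i) (by omega)).symm c : H1 × H2).2‖ ≤ δ) →
      ‖c‖ ≤ M * δ := by
  let f : ℕ → unstableFiber P 0 →ₗ[ℝ] H1 × H2 := fun i =>
    ((Usubmodule A11 0).starProjection.toLinearMap ∘ₗ LinearMap.fst ℝ H1 H2 ∘ₗ
        (unstableFiber P 0).subtype).prod
      (LinearMap.snd ℝ H1 H2 ∘ₗ (unstableFiber P (-i)).subtype ∘ₗ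
        (h.kerEquiv (k := -i) (by omega)).symm.toLinearMap)
  have hf : ⨅ i, LinearMap.ker (f i) = ⊥ := by
    refine eq_bot_iff.2 fun c hc => ?_
    simp only [Submodule.mem_iInf, LinearMap.mem_ker, f, LinearMap.prod_apply, Function.prod,
      Prod.mk_eq_zero, LinearMap.coe_comp, Function.comp_apply] at hc
    have hsnd : ∀ k (hk : k ≤ 0), ((h.kerEquiv hk).symm c : H1 × H2).2 = 0 := fun k hk => by
      obtain ⟨i, rfl⟩ : ∃ i : ℕ, k = -i := ⟨(-k).toNat, by omega⟩
      exact (hc i).2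
    have hfst : (c : H1 × H2).1 = 0 := by
      rw [← Submodule.starProjection_eq_self_iff.2
        (h.fst_mem_Usubmodule_of_forall_snd_eq_zero c hsnd)]
      exact (hc 0).1
    have hsnd0 : (c : H1 × H2).2 = 0 := by
      simpa [h.coe_kerEquiv_zero_symm_apply] using hsnd 0 le_rfl
    exact Subtype.ext (Prod.ext hfst hsnd0)
  obtain ⟨j, M, hM⟩ := exists_norm_le_of_iInf_ker_eq_bot f hf
  exact ⟨j, M, fun c δ h1 h2 => hM c δ fun i hi => norm_prod_le_iff.2 ⟨h1, h2 i hi⟩⟩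

lemma eventually_norm_Phi_sub_P_le [FiniteDimensional ℝ (unstableFiber P 0)] :
    ∀ᶠ C in atTop, ∀ n ≤ 0, ∀ s ∈ stableSubmodule A11 n,
      ‖Phi (triangular A11 A12 A22) 0 n ((s, 0) - P n (s, 0))‖ ≤ C * exp (α * n) * ‖s‖ := by
  obtain ⟨j, M, hM⟩ := h.exists_norm_le_of_observations
  refine Filter.Eventually.forall_le_of_forall_le (fun n => ?_) (N := -j) ?_ 0
  · let L := Phi (triangular A11 A12 A22) 0 n ∘L (ContinuousLinearMap.id ℝ _ - P n) ∘L
      ContinuousLinearMap.inl ℝ H1 H2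
    filter_upwards [eventually_ge_atTop (‖L‖ * exp (-(α * n)))] with C hC s _
    calc ‖Phi (triangular A11 A12 A22) 0 n ((s, 0) - P n (s, 0))‖ = ‖L s‖ := by simp [L]
      _ ≤ ‖L‖ * exp (-(α * n)) * exp (α * n) * ‖s‖ := by
        rw [mul_assoc ‖L‖, ← exp_add, neg_add_cancel, exp_zero, mul_one]
        exact L.le_opNorm s
      _ ≤ C * exp (α * n) * ‖s‖ := by gcongr
  · filter_upwards [eventually_ge_atTop (M * (K * exp (α * j)))] with C hC n hn s hs
    have hn0 : n ≤ 0 := by omega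
    have hα := h.α_pos
    have hω := h.P_sub_P_apply hn0 (s, 0)
    have hbound : ∀ k : ℤ, n ≤ k → -(j : ℤ) ≤ k → k ≤ 0 →
        ‖Phi (triangular A11 A12 A22) k n (P n (s, 0))‖ ≤
          K * exp (α * j) * exp (α * n) * ‖s‖ := by
      intro k hnk hjk hk
      refine (h.norm_Phi_P_apply_le hnk hk _).trans ?_
      rw [norm_mk_zero, mul_assoc K (exp (α * j)), ← exp_add]
      have hjk' : -(j : ℝ) ≤ k := by exact_mod_cast hjk
      have := h.K_pos
      gcongr
      nlinarith
    -- The observations of `c` only see `P n (s, 0)`, whose orbit decays.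
    let c : unstableFiber P 0 := ⟨_, h.P_Phi_apply_eq_zero hn0 le_rfl hω⟩
    have hc := hM c (K * exp (α * j) * exp (α * n) * ‖s‖) ?_ ?_
    · calc ‖Phi (triangular A11 A12 A22) 0 n ((s, 0) - P n (s, 0))‖ = ‖c‖ := rfl
        _ ≤ M * (K * exp (α * j)) * exp (α * n) * ‖s‖ := by linarith
        _ ≤ C * exp (α * n) * ‖s‖ := by gcongr
    · have hπ : (Usubmodule A11 0).starProjection (Phi A11 0 n s) = 0 := hs
      simp only [c, map_sub, Prod.fst_sub, Phi_triangular_mk_zero hn0, hπ, zero_sub, norm_neg]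
      exact (Submodule.norm_starProjection_apply_le _ _).trans
        ((_root_.norm_fst_le _).trans (hbound 0 hn0 (by omega) le_rfl))
    · intro i hi
      rw [h.coe_kerEquiv_symm_apply (by omega) (by omega) hω rfl,
        Phi_triangular_sub_P_mk_zero (by omega), Prod.snd_sub, zero_sub, norm_neg]
      exact (_root_.norm_snd_le _).trans (hbound _ (by omega) (by omega) (by omega))

lemma norm_Phi_apply_le_of_mem_stableSubmodule (hnm : n ≤ m) (hm : m ≤ 0) {C : ℝ}
    (hC0 : 0 ≤ C) (hC : ∀ s ∈ stableSubmodule A11 n,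
      ‖Phi (triangular A11 A12 A22) 0 n ((s, 0) - P n (s, 0))‖ ≤ C * exp (α * n) * ‖s‖)
    {s : H1} (hs : s ∈ stableSubmodule A11 n) :
    ‖Phi A11 m n s‖ ≤ (K + K * C) * exp (-α * ((m : ℝ) - n)) * ‖s‖ := by
  have hn : n ≤ 0 := hnm.trans hm
  have hsplit : ((Phi A11 m n s, 0) : H1 × H2) = Phi (triangular A11 A12 A22) m n (P n (s, 0)) +
      Phi (triangular A11 A12 A22) m n ((s, 0) - P n (s, 0)) := by
    rw [Phi_triangular_sub_P_mk_zero hnm, add_sub_cancel]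
  have hstab := h.norm_Phi_P_apply_le hnm hm (s, 0)
  have hunst : ‖Phi (triangular A11 A12 A22) m n ((s, 0) - P n (s, 0))‖ ≤
      K * C * exp (-α * ((m : ℝ) - n)) * ‖s‖ := by
    refine (h.norm_Phi_apply_le_of_P_eq_zero hnm hm (h.P_sub_P_apply hn _)).trans ?_
    have hexp : exp (α * m) * exp (α * n) ≤ exp (-α * ((m : ℝ) - n)) := by
      rw [← exp_add, exp_le_exp]
      nlinarith [h.α_pos, (Int.cast_nonpos.2 hm : (m : ℝ) ≤ 0)]
    have := h.K_pos
    calc K * exp (α * m) * ‖Phi (triangular A11 A12 A22) 0 n ((s, 0) - P n (s, 0))‖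
        ≤ K * exp (α * m) * (C * exp (α * n) * ‖s‖) := by gcongr; exact hC s hs
      _ = K * C * (exp (α * m) * exp (α * n)) * ‖s‖ := by ring
      _ ≤ K * C * exp (-α * ((m : ℝ) - n)) * ‖s‖ := by gcongr
  calc ‖Phi A11 m n s‖ = ‖((Phi A11 m n s, 0) : H1 × H2)‖ := (norm_mk_zero _).symm
    _ ≤ K * exp (-α * ((m : ℝ) - n)) * ‖s‖ + K * C * exp (-α * ((m : ℝ) - n)) * ‖s‖ := by
      rw [hsplit]
      exact (norm_add_le _ _).trans (add_le_add (by simpa using hstab) hunst)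
    _ = (K + K * C) * exp (-α * ((m : ℝ) - n)) * ‖s‖ := by ring

end

section

variable [FiniteDimensional ℝ (Usubmodule A11 0)]

/-- The projection onto the bounded backward solutions along `stableSubmodule A11 n`. -/
def unstableProj (hn : n ≤ 0) : H1 →L[ℝ] H1 :=
  (Usubmodule A11 n).subtypeL ∘L
    LinearMap.toContinuousLinearMap (h.UsubmoduleEquiv hn).symm.toLinearMap ∘L
    (Usubmodule A11 0).orthogonalProjectionOnto ∘L Phi A11 0 n

section

variable (hn : n ≤ 0)

lemma unstableProj_apply_mem (v : H1) : h.unstableProj hn v ∈ Usubmodule A11 n :=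
  ((h.UsubmoduleEquiv hn).symm _).2

lemma Phi_unstableProj_apply (v : H1) :
    Phi A11 0 n (h.unstableProj hn v) = (Usubmodule A11 0).starProjection (Phi A11 0 n v) := by
  calc Phi A11 0 n (h.unstableProj hn v)
      = (h.UsubmoduleEquiv hn ((h.UsubmoduleEquiv hn).symm
          ((Usubmodule A11 0).orthogonalProjectionOnto (Phi A11 0 n v))) : H1) := rfl
    _ = (Usubmodule A11 0).starProjection (Phi A11 0 n v) := by
      rw [LinearEquiv.apply_symm_apply, Submodule.starProjection_apply]

lemma sub_unstableProj_apply_mem (v : H1) : v - h.unstableProj hn v ∈ stableSubmodule A11 n := by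
  rw [mem_stableSubmodule, map_sub, map_sub, h.Phi_unstableProj_apply hn,
    Submodule.starProjection_eq_self_iff.2 (Submodule.starProjection_apply_mem _ _), sub_self]

lemma unstableProj_apply_eq {u v : H1} (hu : u ∈ Usubmodule A11 n)
    (hvu : v - u ∈ stableSubmodule A11 n) : h.unstableProj hn v = u := by
  have hd : h.unstableProj hn v - u ∈ Usubmodule A11 n :=
    sub_mem (h.unstableProj_apply_mem hn v) hu
  have hπ : (Usubmodule A11 0).starProjection (Phi A11 0 n v) = Phi A11 0 n u := by
    rw [mem_stableSubmodule, map_sub, map_sub, sub_eq_zero,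
      Submodule.starProjection_eq_self_iff.2 (Phi_apply_mem_Usubmodule hn hu)] at hvu
    exact hvu
  have hΦ : Phi A11 0 n (h.unstableProj hn v - u) = 0 := by
    rw [map_sub, h.Phi_unstableProj_apply hn, hπ, sub_self]
  simpa [hΦ, sub_eq_zero] using h.norm_le_of_mem_Usubmodule hn le_rfl hd

lemma unstableProj_apply_of_mem {u : H1} (hu : u ∈ Usubmodule A11 n) :
    h.unstableProj hn u = u :=
  h.unstableProj_apply_eq hn hu (by simp)

lemma unstableProj_unstableProj_apply (v : H1) :
    h.unstableProj hn (h.unstableProj hn v) = h.unstableProj hn v :=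
  h.unstableProj_apply_of_mem hn (h.unstableProj_apply_mem hn v)

lemma norm_unstableProj_apply_le {C : ℝ}
    (hC : ∀ s ∈ stableSubmodule A11 n,
      ‖Phi (triangular A11 A12 A22) 0 n ((s, 0) - P n (s, 0))‖ ≤ C * exp (α * n) * ‖s‖)
    (hsmall : K * exp (α * n) * (C * exp (α * n)) ≤ 1 / 2) (v : H1) :
    ‖h.unstableProj hn v‖ ≤ (3 + 2 * K) * ‖v‖ := by
  set u := h.unstableProj hn v
  set s := v - u
  have hs : s ∈ stableSubmodule A11 n := h.sub_unstableProj_apply_mem hn v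
  set ω : H1 × H2 := (s, 0) - P n (s, 0)
  have hsplit : ((v, 0) : H1 × H2) - P n (v, 0) = (u, 0) + ω := by
    have hv : ((v, 0) : H1 × H2) = (u, 0) + (s, 0) := by simp [s]
    rw [hv, map_add, h.P_mk_zero_eq_zero hn (h.unstableProj_apply_mem hn v), zero_add,
      add_sub_assoc]
  have h1 : ‖((u, 0) : H1 × H2) + ω‖ ≤ (1 + K) * ‖v‖ := by
    simpa [hsplit] using h.norm_sub_P_apply_le hn (v, 0)
  have h2 : ‖ω‖ ≤ 1 / 2 * ‖s‖ := by
    have := h.K_pos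
    calc ‖ω‖ ≤ K * exp (α * n) * ‖Phi (triangular A11 A12 A22) 0 n ω‖ :=
          h.norm_le_of_P_eq_zero' hn (h.P_sub_P_apply hn _)
      _ ≤ K * exp (α * n) * (C * exp (α * n) * ‖s‖) := by gcongr; exact hC s hs
      _ = K * exp (α * n) * (C * exp (α * n)) * ‖s‖ := by ring
      _ ≤ 1 / 2 * ‖s‖ := by gcongr
  have h3 : ‖s‖ ≤ ‖v‖ + ‖u‖ := norm_sub_le v u
  have h4 : ‖u‖ ≤ ‖((u, 0) : H1 × H2) + ω‖ + ‖ω‖ := by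
    simpa using norm_sub_le (((u, 0) : H1 × H2) + ω) ω
  linarith

end

lemma eventually_norm_unstableProj_le [FiniteDimensional ℝ (unstableFiber P 0)] :
    ∀ᶠ Γ in atTop, ∀ n (hn : n ≤ 0), ∀ v, ‖h.unstableProj hn v‖ ≤ Γ * ‖v‖ := by
  obtain ⟨C, hC⟩ := h.eventually_norm_Phi_sub_P_le.exists
  have hexp : Tendsto (fun n : ℤ => exp (α * n)) atBot (𝓝 0) :=
    tendsto_exp_atBot.comp ((tendsto_intCast_atBot_iff.2 tendsto_id).const_mul_atBot h.α_pos)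
  have hsmall : ∀ᶠ n : ℤ in atBot, K * exp (α * n) * (C * exp (α * n)) ≤ 1 / 2 := by
    refine Tendsto.eventually ?_ (ge_mem_nhds (by norm_num : (0 : ℝ) < 1 / 2))
    simpa using (hexp.const_mul K).mul (hexp.const_mul C)
  obtain ⟨N, hN⟩ := eventually_atBot.1 hsmall
  refine (Filter.Eventually.forall_le_of_forall_le
    (p := fun n Γ => ∀ (hn : n ≤ 0) (v : H1), ‖h.unstableProj hn v‖ ≤ Γ * ‖v‖)
    (fun n => ?_) (N := min N 0) ?_ 0).mono fun Γ hΓ n hn => hΓ n hn hn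
  · by_cases hn : n ≤ 0
    · filter_upwards [eventually_ge_atTop ‖h.unstableProj hn‖] with Γ hΓ _ v
      exact (h.unstableProj hn).le_opNorm v |>.trans (by gcongr)
    · exact Eventually.of_forall fun Γ hn' => absurd hn' hn
  · filter_upwards [eventually_ge_atTop (3 + 2 * K)] with Γ hΓ n hnN hn v
    refine (h.norm_unstableProj_apply_le hn (hC n hn) (hN n (le_min_iff.1 hnN).1) v).trans ?_
    gcongr

/-- The value for `n > 0` is never used. -/
def stableProj (n : ℤ) : H1 →L[ℝ] H1 :=
  if hn : n ≤ 0 then ContinuousLinearMap.id ℝ H1 - h.unstableProj hn else 0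

lemma stableProj_apply (hn : n ≤ 0) (v : H1) : h.stableProj n v = v - h.unstableProj hn v := by
  simp [stableProj, hn]

lemma stableProj_apply_eq_zero_iff (hn : n ≤ 0) {v : H1} :
    h.stableProj n v = 0 ↔ v ∈ Usubmodule A11 n := by
  rw [h.stableProj_apply hn, sub_eq_zero]
  exact ⟨fun hv => hv ▸ h.unstableProj_apply_mem hn v,
    fun hv => (h.unstableProj_apply_of_mem hn hv).symm⟩

lemma isExpDichotomyWith_stableProj {C Γ : ℝ} (hC0 : 0 ≤ C)
    (hC : ∀ n ≤ 0, ∀ s ∈ stableSubmodule A11 n,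
      ‖Phi (triangular A11 A12 A22) 0 n ((s, 0) - P n (s, 0))‖ ≤ C * exp (α * n) * ‖s‖)
    (hΓ0 : 0 ≤ Γ) (hΓ : ∀ n (hn : n ≤ 0), ∀ v, ‖h.unstableProj hn v‖ ≤ Γ * ‖v‖) :
    IsExpDichotomyWith A11 h.stableProj ((K + K * C) * (1 + Γ) + K * Γ) α := by
  have hK := h.K_pos
  refine ⟨by positivity, h.α_pos, fun n hn => ?_, fun n hn => ?_, fun n hn => ?_,
    fun m n hm hn hnm => ?_, fun m n hm hn hmn x y hx hxy => ?_⟩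
  · ext v
    simp [h.stableProj_apply hn, h.unstableProj_unstableProj_apply hn]
  · ext v
    have hcomm : h.unstableProj (by omega : n + 1 ≤ 0) (A11 n v) =
        A11 n (h.unstableProj (by omega : n ≤ 0) v) :=
      h.unstableProj_apply_eq _ (apply_mem_Usubmodule (h.unstableProj_apply_mem _ v))
        (by rw [← map_sub]; exact apply_mem_stableSubmodule hn (h.sub_unstableProj_apply_mem _ v))
    simp [h.stableProj_apply (by omega : n ≤ 0), h.stableProj_apply (by omega : n + 1 ≤ 0), hcomm]
  · have hker : ∀ k ≤ 0, {x : H1 | h.stableProj k x = 0} = Usubmodule A11 k := fun k hk =>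
      Set.ext fun _ => h.stableProj_apply_eq_zero_iff hk
    rw [hker n (by omega), hker (n + 1) (by omega)]
    exact h.bijOn_Usubmodule hn
  · refine ContinuousLinearMap.opNorm_le_bound _ (by positivity) fun v => ?_
    have hP1 : ‖h.stableProj n v‖ ≤ (1 + Γ) * ‖v‖ := by
      rw [h.stableProj_apply hn]
      exact (norm_sub_le _ _).trans (by linarith [hΓ n hn v])
    have hstab := h.norm_Phi_apply_le_of_mem_stableSubmodule hnm hm hC0 (hC n hn)
      (h.stableProj_apply hn v ▸ h.sub_unstableProj_apply_mem hn v)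
    calc ‖(Phi A11 m n).comp (h.stableProj n) v‖
        ≤ (K + K * C) * exp (-α * ((m : ℝ) - n)) * ((1 + Γ) * ‖v‖) :=
          hstab.trans (by gcongr)
      _ ≤ ((K + K * C) * (1 + Γ) + K * Γ) * exp (-α * ((m : ℝ) - n)) * ‖v‖ := by
          have : 0 ≤ K * Γ * exp (-α * ((m : ℝ) - n)) * ‖v‖ := by positivity
          nlinarith
  · have hxU : x ∈ Usubmodule A11 m := (h.stableProj_apply_eq_zero_iff hm).1 hx
    rw [h.stableProj_apply hn, sub_sub_cancel] at hxy
    calc ‖x‖ ≤ K * exp (-α * ((n : ℝ) - m)) * ‖Phi A11 n m x‖ :=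
          h.norm_le_of_mem_Usubmodule hmn hn hxU
      _ ≤ K * exp (-α * ((n : ℝ) - m)) * (Γ * ‖y‖) := by rw [hxy]; gcongr; exact hΓ n hn y
      _ ≤ ((K + K * C) * (1 + Γ) + K * Γ) * exp (-α * ((n : ℝ) - m)) * ‖y‖ := by
          have : 0 ≤ (K + K * C) * (1 + Γ) * exp (-α * ((n : ℝ) - m)) * ‖y‖ := by positivity
          nlinarith

end

end IsExpDichotomyWith

end Hilbert

theorem block1_dichotomy_of_triangular_Zminus_general {H1 : Type u} {H2 : Type u}
    [NormedAddCommGroup H1] [InnerProductSpace ℝ H1]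
    [NormedAddCommGroup H2] [InnerProductSpace ℝ H2]
    (A11 : ℤ → H1 →L[ℝ] H1) (A12 : ℤ → H2 →L[ℝ] H1) (A22 : ℤ → H2 →L[ℝ] H2)
    (P : ℤ → (H1 × H2) →L[ℝ] H1 × H2)
    (hP : IsExpDichotomy {n : ℤ | n ≤ 0} {n : ℤ | n ≤ -1} (triangular A11 A12 A22) P)
    (hfin : Module.rank ℝ (LinearMap.ker (P 0 : (H1 × H2) →ₗ[ℝ] H1 × H2)) < Cardinal.aleph0) :
    ExpDichotomy {n : ℤ | n ≤ 0} {n : ℤ | n ≤ -1} A11 ∧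
      (∀ m : ℤ, m ≤ 0 →
        Module.rank ℝ (Submodule.span ℝ (Uset A11 m)) ≤
          Module.rank ℝ (LinearMap.ker (P 0 : (H1 × H2) →ₗ[ℝ] H1 × H2))) ∧
      (∀ m m' : ℤ, m ≤ 0 → m' ≤ 0 →
        Module.rank ℝ (Submodule.span ℝ (Uset A11 m)) =
          Module.rank ℝ (Submodule.span ℝ (Uset A11 m'))) := by
  obtain ⟨K, α, h⟩ := isExpDichotomy_iff.1 hP
  have : FiniteDimensional ℝ (unstableFiber P 0) := Module.rank_lt_aleph0_iff.1 hfin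
  have := h.finiteDimensional_Usubmodule
  obtain ⟨C, hC, hC0⟩ := (h.eventually_norm_Phi_sub_P_le.and (eventually_ge_atTop 0)).exists
  obtain ⟨Γ, hΓ, hΓ0⟩ := (h.eventually_norm_unstableProj_le.and (eventually_ge_atTop 0)).exists
  refine ⟨⟨h.stableProj, isExpDichotomy_iff.2 ⟨_, _,
    h.isExpDichotomyWith_stableProj hC0 hC hΓ0 hΓ⟩⟩, fun m hm => ?_, fun m m' hm hm' => ?_⟩
  · rw [span_Uset, (h.UsubmoduleEquiv hm).rank_eq]
    exact h.rank_Usubmodule_zero_le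
  · rw [span_Uset, span_Uset, (h.UsubmoduleEquiv hm).rank_eq, (h.UsubmoduleEquiv hm').rank_eq]

theorem block1_dichotomy_of_triangular_Zminus {H1 : Type u} {H2 : Type u}
    [NormedAddCommGroup H1] [InnerProductSpace ℝ H1] [CompleteSpace H1]
    [NormedAddCommGroup H2] [InnerProductSpace ℝ H2] [CompleteSpace H2]
    (A11 : ℤ → H1 →L[ℝ] H1) (A12 : ℤ → H2 →L[ℝ] H1) (A22 : ℤ → H2 →L[ℝ] H2)
    (P : ℤ → (H1 × H2) →L[ℝ] H1 × H2)
    (hP : IsExpDichotomy {n : ℤ | n ≤ 0} {n : ℤ | n ≤ -1} (triangular A11 A12 A22) P)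
    (hfin : Module.rank ℝ (LinearMap.ker (P 0 : (H1 × H2) →ₗ[ℝ] H1 × H2)) < Cardinal.aleph0) :
    ExpDichotomy {n : ℤ | n ≤ 0} {n : ℤ | n ≤ -1} A11 ∧
      (∀ m : ℤ, m ≤ 0 →
        Module.rank ℝ (Submodule.span ℝ (Uset A11 m)) ≤
          Module.rank ℝ (LinearMap.ker (P 0 : (H1 × H2) →ₗ[ℝ] H1 × H2))) ∧
      (∀ m m' : ℤ, m ≤ 0 → m' ≤ 0 →
        Module.rank ℝ (Submodule.span ℝ (Uset A11 m)) =
          Module.rank ℝ (Submodule.span ℝ (Uset A11 m'))) :=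
  block1_dichotomy_of_triangular_Zminus_general A11 A12 A22 P hP hfin

end
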